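/- For every restricted pushdown system M = (Q, Σ, Γ, Δ) (i.e., one whose ε-rules are all deterministic), there exists a pushdown system M' = (Q, Σ, Γ, Δ') with the same control states and stack symbols, in which every ε-rule is deterministic and popping, such that for every p ∈ Q and Y ∈ Γ, the configuration pY in L_M is weakly bisimilar to the configuration pY in L_{M'} (in the disjoint union of the two labelled transition systems). -/

import Mathlib

namespace PDS

/-- a transition rule `pY →_a qγ` of a pushdown system (`a = none` means `ε`) -/
structure PRule (Q Act Γ : Type) where
  p : Q
  Y : Γ
  a : Option Act
  q : Q
  out : List Γ

/-- The transition relation of the LTS `L_M` generated by a pushdown system with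
rule set `Δ`: each rule `pY →_a qγ` induces `pYγ' →_a qγγ'` for all `γ' ∈ Γ*`. -/
def pstep {Q Act Γ : Type} (Δ : Set (PRule Q Act Γ)) :
    Option Act → Q × List Γ → Q × List Γ → Prop := fun a s t =>
  ∃ r ∈ Δ, r.a = a ∧ ∃ γ' : List Γ, s = (r.p, r.Y :: γ') ∧ t = (r.q, r.out ++ γ')

section Weak

variable {A S T : Type*}

/-- `s ⇒_a t` (for `a = ε` an arbitrary sequence of silent steps, for `a ∈ Σ` a
visible step surrounded by silent steps) -/
def wstep (tr : Option A → S → S → Prop) : Option A → S → S → Prop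
  | none => Relation.ReflTransGen (tr none)
  | some a => fun s t => ∃ u v, Relation.ReflTransGen (tr none) s u ∧
      tr (some a) u v ∧ Relation.ReflTransGen (tr none) v t

/-- `R` is a weak bisimulation -/
def IsWeakBisim (tr : Option A → S → S → Prop) (R : S → S → Prop) : Prop :=
  ∀ s t, R s t →
    (∀ a s', tr a s s' → ∃ t', wstep tr a t t' ∧ R s' t') ∧
    (∀ a t', tr a t t' → ∃ s', wstep tr a s s' ∧ R s' t')

/-- weak bisimilarity `≈`: the largest weak bisimulation -/
def WeakBisim (tr : Option A → S → S → Prop) (s t : S) : Prop :=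
  ∃ R, IsWeakBisim tr R ∧ R s t

/-- the disjoint union of two labelled transition systems -/
def sumStep (t1 : A → S → S → Prop) (t2 : A → T → T → Prop) :
    A → S ⊕ T → S ⊕ T → Prop
  | a, Sum.inl s, Sum.inl s' => t1 a s s'
  | a, Sum.inr t, Sum.inr t' => t2 a t t'
  | _, _, _ => False

/-- regard an LTS without silent actions as one with (unused) silent actions -/
def liftTr (tr : A → S → S → Prop) : Option A → S → S → Prop
  | none => fun _ _ => False
  | some a => tr a

end Weak

end PDS

/-!
In a restricted PDS the ε-moves are deterministic, so every configuration has at most one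
ε-normal form, and relating a configuration of `M` to one of `M'` when both have the same
ε-normal forms in `M` gives a weak bisimulation. `M'` is obtained by saturating the head
symbols: `pY →_ε q` whenever the ε-run of `M` from `pY` empties the stack in state `q`, and
`pY →_a q'(γβ)` whenever it reaches `rZβ` and `rZ →_a q'γ` is a rule of `M`. A weak visible
move of `M` from `pZ₁⋯Zₙ` is then simulated in `M'` by popping the symbols that the ε-run of
`M` consumes and firing one saturated visible rule on the first symbol it does not consume.
-/

namespace PDS

open Relation

section Transfer

variable {A S T : Type*} {t1 : Option A → S → S → Prop} {t2 : Option A → T → T → Prop}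

theorem wstep_sumStep_inl {a : Option A} {s s' : S} (h : wstep t1 a s s') :
    wstep (sumStep t1 t2) a (Sum.inl s) (Sum.inl s') := by
  have lift := ReflTransGen.lift (p := sumStep t1 t2 none) Sum.inl fun _ _ h => h
  cases a with
  | none => exact lift _ _ h
  | some a =>
    obtain ⟨u, v, hu, huv, hv⟩ := h
    exact ⟨Sum.inl u, Sum.inl v, lift _ _ hu, huv, lift _ _ hv⟩

theorem wstep_sumStep_inr {a : Option A} {t t' : T} (h : wstep t2 a t t') :
    wstep (sumStep t1 t2) a (Sum.inr t) (Sum.inr t') := by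
  have lift := ReflTransGen.lift (p := sumStep t1 t2 none) Sum.inr fun _ _ h => h
  cases a with
  | none => exact lift _ _ h
  | some a =>
    obtain ⟨u, v, hu, huv, hv⟩ := h
    exact ⟨Sum.inr u, Sum.inr v, lift _ _ hu, huv, lift _ _ hv⟩

theorem weakBisim_inl_inr_of_transfer (R : S → T → Prop)
    (forth : ∀ s t, R s t → ∀ a s', t1 a s s' → ∃ t', wstep t2 a t t' ∧ R s' t')
    (back : ∀ s t, R s t → ∀ a t', t2 a t t' → ∃ s', wstep t1 a s s' ∧ R s' t')
    {s : S} {t : T} (hst : R s t) :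
    WeakBisim (sumStep t1 t2) (Sum.inl s) (Sum.inr t) := by
  refine ⟨fun u v => ∃ s t, u = Sum.inl s ∧ v = Sum.inr t ∧ R s t, ?_,
    s, t, rfl, rfl, hst⟩
  rintro _ _ ⟨s, t, rfl, rfl, hst⟩
  constructor
  · rintro a (s' | t') h
    · obtain ⟨t', ht', hst'⟩ := forth s t hst a s' h
      exact ⟨Sum.inr t', wstep_sumStep_inr ht', s', t', rfl, rfl, hst'⟩
    · exact h.elim
  · rintro a (s' | t') h
    · exact h.elim
    · obtain ⟨s', hs', hst'⟩ := back s t hst a t' h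
      exact ⟨Sum.inl s', wstep_sumStep_inl hs', s', t', rfl, rfl, hst'⟩

end Transfer

variable {Q Act Γ : Type} {Δ : Set (PRule Q Act Γ)}

abbrev EpsReach (Δ : Set (PRule Q Act Γ)) : Q × List Γ → Q × List Γ → Prop :=
  ReflTransGen (pstep Δ none)

def IsEpsNormal (Δ : Set (PRule Q Act Γ)) (c : Q × List Γ) : Prop :=
  ∀ t, ¬ pstep Δ none c t

def epsNormalForms (Δ : Set (PRule Q Act Γ)) (s : Q × List Γ) : Set (Q × List Γ) :=
  {x | EpsReach Δ s x ∧ IsEpsNormal Δ x}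

def IsRestricted (Δ : Set (PRule Q Act Γ)) : Prop :=
  ∀ r ∈ Δ, r.a = none → ∀ r' ∈ Δ, r'.p = r.p → r'.Y = r.Y → r' = r

theorem pstep_of_mem {r : PRule Q Act Γ} (hr : r ∈ Δ) {a : Option Act} (ha : r.a = a)
    (γ : List Γ) : pstep Δ a (r.p, r.Y :: γ) (r.q, r.out ++ γ) :=
  ⟨r, hr, ha, γ, rfl, rfl⟩

theorem pstep_append {a : Option Act} {s t : Q × List Γ} (h : pstep Δ a s t) (δ : List Γ) :
    pstep Δ a (s.1, s.2 ++ δ) (t.1, t.2 ++ δ) := by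
  obtain ⟨r, hr, ha, γ, rfl, rfl⟩ := h
  simpa using pstep_of_mem hr ha (γ ++ δ)

theorem EpsReach.append {s t : Q × List Γ} (h : EpsReach Δ s t) (δ : List Γ) :
    EpsReach Δ (s.1, s.2 ++ δ) (t.1, t.2 ++ δ) :=
  ReflTransGen.lift (fun c : Q × List Γ => (c.1, c.2 ++ δ))
    (fun _ _ h => pstep_append h δ) _ _ h

theorem isEpsNormal_nil (q : Q) : IsEpsNormal Δ (q, []) := by
  rintro t ⟨r, -, -, γ, h, -⟩
  simp at h

theorem IsEpsNormal.eq_of_epsReach {x y : Q × List Γ} (hx : IsEpsNormal Δ x)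
    (h : EpsReach Δ x y) : y = x := by
  rcases h.cases_head with rfl | ⟨c, hc, -⟩
  · rfl
  · exact absurd hc (hx c)

theorem epsReach_append_cases {p : Q} {α δ : List Γ} {u : Q × List Γ}
    (h : EpsReach Δ (p, α ++ δ) u) :
    (∃ q, EpsReach Δ (p, α) (q, []) ∧ EpsReach Δ (q, δ) u) ∨
      ∃ q Z β, EpsReach Δ (p, α) (q, Z :: β) ∧ u = (q, Z :: (β ++ δ)) := by
  generalize hs : (p, α ++ δ) = s at h
  induction h using ReflTransGen.head_induction_on generalizing p α with
  | refl =>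
    cases α with
    | nil => exact Or.inl ⟨p, .refl, by subst hs; exact .refl⟩
    | cons Z β => exact Or.inr ⟨p, Z, β, .refl, by simp [← hs]⟩
  | head hstep hrest ih =>
    cases α with
    | nil => exact Or.inl ⟨p, .refl, by simpa [← hs] using hrest.head hstep⟩
    | cons W α =>
      obtain ⟨r, hr, ha, γ, hsr, rfl⟩ := hstep
      obtain ⟨rfl, rfl, rfl⟩ : p = r.p ∧ W = r.Y ∧ α ++ δ = γ := by
        simpa [← hs] using hsr
      have hfirst := pstep_of_mem hr ha α
      rcases ih (p := r.q) (α := r.out ++ α) (by simp) with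
        ⟨q, hq, hqu⟩ | ⟨q, Z, β, hq, rfl⟩
      · exact Or.inl ⟨q, hq.head hfirst, hqu⟩
      · exact Or.inr ⟨q, Z, β, hq.head hfirst, rfl⟩

namespace IsRestricted

variable (hΔ : IsRestricted Δ)
include hΔ

theorem pstep_eq {s t t' : Q × List Γ} {a : Option Act} (ht : pstep Δ none s t)
    (ht' : pstep Δ a s t') : a = none ∧ t' = t := by
  obtain ⟨r, hr, ha, γ, rfl, rfl⟩ := ht
  obtain ⟨r', hr', rfl, γ', hs, rfl⟩ := ht'
  obtain ⟨hp, hY, rfl⟩ : r.p = r'.p ∧ r.Y = r'.Y ∧ γ = γ' := by simpa using hs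
  obtain rfl := hΔ r hr ha r' hr' hp.symm hY.symm
  exact ⟨ha, rfl⟩

theorem isEpsNormal_of_mem {r : PRule Q Act Γ} (hr : r ∈ Δ) {a : Act} (ha : r.a = some a)
    (γ : List Γ) : IsEpsNormal Δ (r.p, r.Y :: γ) := fun _ ht =>
  Option.some_ne_none a (hΔ.pstep_eq ht (pstep_of_mem hr ha γ)).1

theorem rightUnique : Relator.RightUnique (pstep Δ (none : Option Act)) :=
  fun _ _ _ ht ht' => (hΔ.pstep_eq ht ht').2.symm

theorem epsNormalForms_subsingleton (s : Q × List Γ) :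
    (epsNormalForms Δ s).Subsingleton := by
  rintro x ⟨hsx, hx⟩ y ⟨hsy, hy⟩
  rcases ReflTransGen.total_of_right_unique hΔ.rightUnique hsx hsy with hxy | hyx
  · exact (hx.eq_of_epsReach hxy).symm
  · exact hy.eq_of_epsReach hyx

theorem epsNormalForms_eq_of_epsReach {s t : Q × List Γ} (hst : EpsReach Δ s t) :
    epsNormalForms Δ t = epsNormalForms Δ s := by
  ext x
  refine ⟨fun ⟨htx, hx⟩ => ⟨hst.trans htx, hx⟩, fun ⟨hsx, hx⟩ => ⟨?_, hx⟩⟩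
  rcases ReflTransGen.total_of_right_unique hΔ.rightUnique hst hsx with htx | hxt
  · exact htx
  · rw [hx.eq_of_epsReach hxt]

end IsRestricted

inductive SaturatedRule (Δ : Set (PRule Q Act Γ)) : PRule Q Act Γ → Prop
  | pop {p : Q} {Y : Γ} {q : Q} :
      EpsReach Δ (p, [Y]) (q, []) → SaturatedRule Δ ⟨p, Y, none, q, []⟩
  | visible {p : Q} {Y : Γ} {β : List Γ} {r : PRule Q Act Γ} {a : Act} :
      r ∈ Δ → r.a = some a → EpsReach Δ (p, [Y]) (r.p, r.Y :: β) →
      SaturatedRule Δ ⟨p, Y, some a, r.q, r.out ++ β⟩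

def saturate (Δ : Set (PRule Q Act Γ)) : Set (PRule Q Act Γ) :=
  {r | SaturatedRule Δ r}

theorem wstep_saturate_of_epsReach {r : PRule Q Act Γ} (hr : r ∈ Δ) {a : Act}
    (ha : r.a = some a) {γ : List Γ} :
    ∀ {p : Q} {α : List Γ}, EpsReach Δ (p, α) (r.p, r.Y :: γ) →
      wstep (pstep (saturate Δ)) (some a) (p, α) (r.q, r.out ++ γ)
  | p, [], h => by simpa using isEpsNormal_nil p |>.eq_of_epsReach h
  | p, W :: δ, h => by
    rcases epsReach_append_cases (α := [W]) h with ⟨q, hpop, hq⟩ | ⟨q, Z, β, hvis, heq⟩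
    · obtain ⟨u, v, hu, huv, hv⟩ := wstep_saturate_of_epsReach hr ha hq
      have hpop' : pstep (saturate Δ) none (p, W :: δ) (q, δ) :=
        pstep_of_mem (SaturatedRule.pop hpop) rfl δ
      exact ⟨u, v, hu.head hpop', huv, hv⟩
    · obtain ⟨rfl, rfl, rfl⟩ : q = r.p ∧ Z = r.Y ∧ β ++ δ = γ := by
        simpa [eq_comm] using heq
      have hfire : pstep (saturate Δ) (some a) (p, W :: δ) (r.q, r.out ++ (β ++ δ)) := by
        rw [← List.append_assoc]
        exact pstep_of_mem (SaturatedRule.visible hr ha hvis) rfl δ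
      exact ⟨_, _, .refl, hfire, .refl⟩

namespace IsRestricted

variable (hΔ : IsRestricted Δ)
include hΔ

theorem saturate_finite [Finite Q] [Finite Γ] (hfin : Δ.Finite) : (saturate Δ).Finite := by
  have hpops : (Set.range fun x : Q × Γ × Q =>
      (⟨x.1, x.2.1, none, x.2.2, []⟩ : PRule Q Act Γ)).Finite :=
    Set.finite_range _
  -- the `β` of a saturated visible rule at `pY` is read off the unique ε-normal form of `pY`
  have hvisibles : (⋃ x : Q × Γ, ⋃ r ∈ Δ, ⋃ c ∈ epsNormalForms Δ (x.1, [x.2]),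
      {(⟨x.1, x.2, r.a, r.q, r.out ++ c.2.tail⟩ : PRule Q Act Γ)}).Finite :=
    Set.finite_iUnion fun x => hfin.biUnion fun r _ =>
      (hΔ.epsNormalForms_subsingleton _).finite.biUnion fun _ _ => Set.finite_singleton _
  refine (hpops.union hvisibles).subset ?_
  rintro _ (@⟨p, Y, q, -⟩ | @⟨p, Y, β, r, a, hr, ha, hreach⟩)
  · exact Or.inl ⟨(p, Y, q), rfl⟩
  · have hnf : (r.p, r.Y :: β) ∈ epsNormalForms Δ (p, [Y]) :=
      ⟨hreach, hΔ.isEpsNormal_of_mem hr ha β⟩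
    simp only [Set.mem_union, Set.mem_iUnion]
    exact Or.inr ⟨(p, Y), r, hr, _, hnf, by simp [ha]⟩

theorem saturate_eps {r : PRule Q Act Γ} (hr : r ∈ saturate Δ) (ha : r.a = none) :
    (∀ r' ∈ saturate Δ, r'.p = r.p → r'.Y = r.Y → r' = r) ∧ r.out = [] := by
  cases hr with
  | visible => cases ha
  | @pop p Y q hpop =>
    refine ⟨fun r' hr' hp hY => ?_, rfl⟩
    cases hr' with
    | @pop p' Y' q' hpop' =>
      obtain ⟨rfl, rfl⟩ : p' = p ∧ Y' = Y := ⟨hp, hY⟩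
      have := hΔ.epsNormalForms_subsingleton _ ⟨hpop', isEpsNormal_nil q'⟩
        ⟨hpop, isEpsNormal_nil q⟩
      obtain rfl : q' = q := by simpa using this
      rfl
    | @visible p' Y' β s a hs hsa hvis =>
      obtain ⟨rfl, rfl⟩ : p' = p ∧ Y' = Y := ⟨hp, hY⟩
      have := hΔ.epsNormalForms_subsingleton _ ⟨hvis, hΔ.isEpsNormal_of_mem hs hsa β⟩
        ⟨hpop, isEpsNormal_nil q⟩
      simp at this

theorem exists_wstep_saturate {s t s' : Q × List Γ} {a : Option Act}
    (hst : epsNormalForms Δ s = epsNormalForms Δ t) (h : pstep Δ a s s') :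
    ∃ t', wstep (pstep (saturate Δ)) a t t' ∧ epsNormalForms Δ s' = epsNormalForms Δ t' := by
  cases a with
  | none => exact ⟨t, .refl, (hΔ.epsNormalForms_eq_of_epsReach (.single h)).trans hst⟩
  | some a =>
    obtain ⟨r, hr, ha, γ, rfl, rfl⟩ := h
    have hnf : (r.p, r.Y :: γ) ∈ epsNormalForms Δ t :=
      hst ▸ ⟨.refl, hΔ.isEpsNormal_of_mem hr ha γ⟩
    exact ⟨_, wstep_saturate_of_epsReach hr ha hnf.1, rfl⟩

theorem exists_wstep_of_pstep_saturate {s t t' : Q × List Γ} {a : Option Act}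
    (hst : epsNormalForms Δ s = epsNormalForms Δ t) (h : pstep (saturate Δ) a t t') :
    ∃ s', wstep (pstep Δ) a s s' ∧ epsNormalForms Δ s' = epsNormalForms Δ t' := by
  obtain ⟨ρ, hρ, rfl, δ, rfl, rfl⟩ := h
  rcases hρ with @⟨p, Y, q, hpop⟩ | @⟨p, Y, β, r, a, hr, ha, hvis⟩
  · have hstep : EpsReach Δ (p, Y :: δ) (q, δ) := by simpa using hpop.append δ
    exact ⟨s, .refl, hst.trans (hΔ.epsNormalForms_eq_of_epsReach hstep).symm⟩
  · have hnf : (r.p, r.Y :: (β ++ δ)) ∈ epsNormalForms Δ s :=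
      hst ▸ ⟨by simpa using hvis.append δ, hΔ.isEpsNormal_of_mem hr ha _⟩
    exact ⟨_, ⟨_, _, hnf.1, pstep_of_mem hr ha _, .refl⟩, by simp⟩

end IsRestricted

end PDS

open PDS in
theorem remove_nonpopping_eps_general (Q Act Γ : Type)
    (hQ : Finite Q) (hΓ : Finite Γ)
    (Δ : Set (PRule Q Act Γ)) (hΔ : Δ.Finite)
    (hdet : ∀ r ∈ Δ, r.a = none → ∀ r' ∈ Δ, r'.p = r.p → r'.Y = r.Y → r' = r) :
    ∃ Δ' : Set (PRule Q Act Γ), Δ'.Finite ∧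
      (∀ r ∈ Δ', r.a = none →
        (∀ r' ∈ Δ', r'.p = r.p → r'.Y = r.Y → r' = r) ∧ r.out = []) ∧
      ∀ (p : Q) (Y : Γ),
        WeakBisim (sumStep (pstep Δ) (pstep Δ'))
          (Sum.inl (p, [Y])) (Sum.inr (p, [Y])) := by
  have hM : IsRestricted Δ := hdet
  refine ⟨saturate Δ, hM.saturate_finite hΔ, fun r hr ha => hM.saturate_eps hr ha,
    fun p Y => ?_⟩
  exact weakBisim_inl_inr_of_transfer (fun s t => epsNormalForms Δ s = epsNormalForms Δ t)
    (fun _ _ hst _ _ h => hM.exists_wstep_saturate hst h)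
    (fun _ _ hst _ _ h => hM.exists_wstep_of_pstep_saturate hst h) rfl

open PDS in
/-- For every restricted pushdown system `M = (Q,Σ,Γ,Δ)` (all
`ε`-rules deterministic) there is a pushdown system `M' = (Q,Σ,Γ,Δ')` with the same
control states and stack symbols, in which every `ε`-rule is deterministic and
popping, such that every configuration `pY` of `L_M` is weakly bisimilar to the
configuration `pY` of `L_{M'}` (in the disjoint union of the two LTSs). -/
theorem remove_nonpopping_eps (Q Act Γ : Type)
    (hQ : Finite Q) (hAct : Finite Act) (hΓ : Finite Γ)
    (Δ : Set (PRule Q Act Γ)) (hΔ : Δ.Finite)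
    (hdet : ∀ r ∈ Δ, r.a = none → ∀ r' ∈ Δ, r'.p = r.p → r'.Y = r.Y → r' = r) :
    ∃ Δ' : Set (PRule Q Act Γ), Δ'.Finite ∧
      (∀ r ∈ Δ', r.a = none →
        (∀ r' ∈ Δ', r'.p = r.p → r'.Y = r.Y → r' = r) ∧ r.out = []) ∧
      ∀ (p : Q) (Y : Γ),
        WeakBisim (sumStep (pstep Δ) (pstep Δ'))
          (Sum.inl (p, [Y])) (Sum.inr (p, [Y])) :=
  remove_nonpopping_eps_general Q Act Γ hQ hΓ Δ hΔ hdet
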